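/- arXiv:hep-th/0312276 — 2 statements merged into one kernel-verified Lean document; each statement's English description precedes it below -/
import Mathlib

section
/- Let M_1, ..., M_k ∈ M_{n×m}(ℂ) be matrices whose real and imaginary parts form 2k ℝ-linearly independent real matrices. Then there exists a fluctuation f with real coefficients and real orthogonal matrices u_j ∈ O(n), v_j ∈ O(m) such that M_1^f = Σ_j r_j u_j M_1 v_j ≠ 0 and M_i^f = 0 for all i ≠ 1. -/
/-!
Every real linear map `φ` on `M_{n×m}(ℝ)` is a real combination of sandwiches `X ↦ u X v` with
`u, v` orthogonal: matrix units span the orthogonal group (`E_ij = P (1 - D) / 2` for a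
permutation matrix `P` and a diagonal sign matrix `D`), and the sandwiches by matrix units form
the standard basis of `End(M_{n×m}(ℝ))`. By linear independence we may choose `φ` fixing
`Re M₁` and killing the other `2k - 1` real and imaginary parts. The corresponding fluctuation
acts on real and imaginary parts separately through `φ`, so it kills every `M_i` with `i ≠ 1`,
while the real part of `M₁^f` is `Re M₁ ≠ 0`.
-/

open Matrix

theorem LinearIndependent.exists_linearMap_apply_eq {ι K V V' : Type*} [DivisionRing K]
    [AddCommGroup V] [Module K V] [AddCommGroup V'] [Module K V'] {v : ι → V}
    (hv : LinearIndependent K v) (w : ι → V') : ∃ f : V →ₗ[K] V', ∀ i, f (v i) = w i := by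
  obtain ⟨f, hf⟩ := LinearMap.exists_extend ((Finsupp.linearCombination K w).comp hv.repr)
  refine ⟨f, fun i => ?_⟩
  have hvi := LinearMap.congr_fun hf ⟨v i, Submodule.subset_span ⟨i, rfl⟩⟩
  simpa [hv.repr_eq_single i ⟨v i, _⟩ rfl] using hvi

namespace Matrix

section OrthogonalGroup

variable {n R : Type*} [Fintype n] [DecidableEq n] [CommRing R]

theorem permMatrix_mem_orthogonalGroup (σ : Equiv.Perm n) :
    σ.permMatrix R ∈ orthogonalGroup n R := by
  rw [mem_orthogonalGroup_iff, transpose_permMatrix, ← permMatrix_mul, inv_mul_cancel,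
    permMatrix_one]

theorem diagonal_mem_orthogonalGroup {d : n → R} (hd : ∀ i, d i * d i = 1) :
    diagonal d ∈ orthogonalGroup n R := by
  rw [mem_orthogonalGroup_iff, diagonal_transpose, diagonal_mul_diagonal, ← diagonal_one]
  exact congrArg diagonal (funext hd)

theorem single_one_mem_span_orthogonalGroup [Invertible (2 : R)] (i j : n) :
    single i j (1 : R) ∈ Submodule.span R (orthogonalGroup n R : Set (Matrix n n R)) := by
  set P := (Equiv.swap i j).permMatrix R
  set D : Matrix n n R := diagonal (1 - Pi.single j 2)
  have hD : D ∈ orthogonalGroup n R := diagonal_mem_orthogonalGroup fun l => by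
    rcases eq_or_ne l j with rfl | hl
    · norm_num
    · simp [hl]
  have hOneSub : 1 - D = single j j 2 := by
    rw [← diagonal_single, ← diagonal_one, diagonal_sub]
    congr 1
    funext l
    simp
  have hsingle : single i j (1 : R) = ⅟(2 : R) • (P - P * D) := by
    rw [← mul_one_sub, hOneSub, PEquiv.toMatrix_toPEquiv_mul, ← Equiv.coe_refl,
      submatrix_single_equiv, smul_single]
    simp
  rw [hsingle]
  exact Submodule.smul_mem _ _ <| Submodule.sub_mem _
    (Submodule.subset_span (permMatrix_mem_orthogonalGroup _))
    (Submodule.subset_span (mul_mem (permMatrix_mem_orthogonalGroup _) hD))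

theorem span_orthogonalGroup_eq_top [Invertible (2 : R)] :
    Submodule.span R (orthogonalGroup n R : Set (Matrix n n R)) = ⊤ := by
  rw [eq_top_iff, ← (stdBasis R n n).span_eq, Submodule.span_le]
  rintro _ ⟨⟨i, j⟩, rfl⟩
  rw [stdBasis_eq_single]
  exact single_one_mem_span_orthogonalGroup i j

end OrthogonalGroup

section Sandwich

variable {n m R : Type*} [Fintype n] [Fintype m] [CommRing R]

variable (R) in
def sandwich : Matrix n n R →ₗ[R] Matrix m m R →ₗ[R] Module.End R (Matrix n m R) :=
  LinearMap.mk₂ R (fun A B => (mulRightLinearMap n R B).comp (mulLeftLinearMap m R A))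
    (fun _ _ _ => LinearMap.ext fun _ => by simp [Matrix.add_mul])
    (fun _ _ _ => LinearMap.ext fun _ => by simp)
    (fun _ _ _ => LinearMap.ext fun _ => Matrix.mul_add _ _ _)
    (fun _ _ _ => LinearMap.ext fun _ => Matrix.mul_smul _ _ _)

@[simp]
theorem sandwich_apply (A : Matrix n n R) (B : Matrix m m R) (X : Matrix n m R) :
    sandwich R A B X = A * X * B :=
  rfl

variable [DecidableEq n] [DecidableEq m]

theorem sandwich_single_single_eq_end_stdBasis (a c : n) (b d : m) :
    sandwich R (single a c 1) (single d b 1) = (stdBasis R n m).end ((a, b), (c, d)) := by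
  refine (stdBasis R n m).ext fun ⟨c', d'⟩ => ?_
  rw [Module.Basis.end_apply_apply]
  simp only [stdBasis_eq_single, sandwich_apply, Prod.mk.injEq]
  obtain rfl | hc := eq_or_ne c c'
  · obtain rfl | hd := eq_or_ne d d'
    · simp [single_mul_single_same]
    · simp [single_mul_single_same, single_mul_single_of_ne _ _ _ _ hd.symm, hd]
  · simp [single_mul_single_of_ne _ _ _ _ hc, hc]

theorem span_image2_sandwich_eq_top :
    Submodule.span R (Set.image2 (fun A B => sandwich R A B) (Set.univ : Set (Matrix n n R))
      (Set.univ : Set (Matrix m m R))) = ⊤ := by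
  rw [eq_top_iff, ← (stdBasis R n m).end.span_eq, Submodule.span_le]
  rintro _ ⟨⟨⟨a, b⟩, c, d⟩, rfl⟩
  exact Submodule.subset_span
    ⟨_, trivial, _, trivial, sandwich_single_single_eq_end_stdBasis a c b d⟩

theorem span_image2_sandwich_orthogonalGroup_eq_top [Invertible (2 : R)] :
    Submodule.span R (Set.image2 (fun A B => sandwich R A B)
      (orthogonalGroup n R : Set (Matrix n n R)) (orthogonalGroup m R : Set (Matrix m m R))) =
      ⊤ := by
  rw [← Submodule.map₂_span_span, span_orthogonalGroup_eq_top, span_orthogonalGroup_eq_top,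
    ← Submodule.span_univ, ← Submodule.span_univ, Submodule.map₂_span_span,
    span_image2_sandwich_eq_top]

theorem exists_sum_smul_sandwich_orthogonalGroup_eq [Invertible (2 : R)]
    (φ : Module.End R (Matrix n m R)) :
    ∃ (N : ℕ) (r : Fin N → R) (u : Fin N → orthogonalGroup n R)
      (v : Fin N → orthogonalGroup m R), ∑ j, r j • sandwich R (u j : Matrix n n R) (v j) = φ := by
  obtain ⟨N, r, g, hg⟩ := Submodule.mem_span_set'.mp
    (span_image2_sandwich_orthogonalGroup_eq_top (n := n) (m := m) (R := R) ▸
      Submodule.mem_top : φ ∈ _)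
  choose u hu v hv huv using fun j => (g j).2
  exact ⟨N, r, fun j => ⟨u j, hu j⟩, fun j => ⟨v j, hv j⟩, by simpa only [huv] using hg⟩

end Sandwich

section RealFluctuation

variable {n m : Type*} [Fintype n] [Fintype m]

theorem map_ofReal_mul_mul (f : ℂ →ₗ[ℝ] ℝ) (A : Matrix n n ℝ) (N : Matrix n m ℂ)
    (B : Matrix m m ℝ) :
    (A.map Complex.ofReal * N * B.map Complex.ofReal).map f = A * N.map f * B := by
  have hf (a b : ℝ) (z : ℂ) : f (a * z * b) = a * f z * b := by
    rw [mul_right_comm, ← Complex.ofReal_mul, ← Complex.real_smul, map_smul, smul_eq_mul]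
    ring
  ext p q
  simp only [mul_apply, map_apply, Finset.sum_mul, map_sum, hf]

theorem map_sum_smul_ofReal_mul_mul (f : ℂ →ₗ[ℝ] ℝ) {J : Type*} (s : Finset J) (r : J → ℝ)
    (u : J → Matrix n n ℝ) (v : J → Matrix m m ℝ) (N : Matrix n m ℂ) :
    (∑ j ∈ s, r j • ((u j).map Complex.ofReal * N * (v j).map Complex.ofReal)).map f =
      (∑ j ∈ s, r j • sandwich ℝ (u j) (v j)) (N.map f) := by
  change f.mapMatrix _ = _
  simp [map_sum, map_ofReal_mul_mul]

end RealFluctuation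

theorem eq_zero_of_map_re_eq_zero_of_map_im_eq_zero {n m : Type*} {X : Matrix n m ℂ}
    (hre : X.map Complex.re = 0) (him : X.map Complex.im = 0) : X = 0 := by
  ext p q
  exact Complex.ext (congrFun₂ hre p q) (congrFun₂ him p q)

end Matrix

/-- If the real and imaginary parts of `M_1, ..., M_k ∈ M_{n×m}(ℂ)` form `2k`
ℝ-linearly independent real matrices, then there is a simultaneous fluctuation
with real coefficients and real orthogonal matrices killing all but the first one. -/
theorem exists_real_fluctuation_isolating_first (n m k : ℕ) (hk : 0 < k)
    (M : Fin k → Matrix (Fin n) (Fin m) ℂ)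
    (hM : LinearIndependent ℝ
      (Sum.elim (fun i : Fin k => (M i).map Complex.re)
                (fun i : Fin k => (M i).map Complex.im))) :
    ∃ (J : Type) (_ : Fintype J) (r : J → ℝ)
      (u : J → Matrix.orthogonalGroup (Fin n) ℝ)
      (v : J → Matrix.orthogonalGroup (Fin m) ℝ),
      (∑ j, r j • (((u j : Matrix (Fin n) (Fin n) ℝ)).map (Complex.ofReal) * M ⟨0, hk⟩ *
          ((v j : Matrix (Fin m) (Fin m) ℝ)).map (Complex.ofReal))) ≠ 0 ∧
      ∀ i : Fin k, i ≠ ⟨0, hk⟩ →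
        (∑ j, r j • (((u j : Matrix (Fin n) (Fin n) ℝ)).map (Complex.ofReal) * M i *
            ((v j : Matrix (Fin m) (Fin m) ℝ)).map (Complex.ofReal))) = 0 := by
  set i₀ : Fin k := ⟨0, hk⟩
  obtain ⟨φ, hφ⟩ :=
    hM.exists_linearMap_apply_eq (Sum.elim (Pi.single i₀ ((M i₀).map Complex.re)) 0)
  have hφ_fix : φ ((M i₀).map Complex.re) = (M i₀).map Complex.re := by
    simpa using hφ (.inl i₀)
  have hφ_re (i : Fin k) (hi : i ≠ i₀) : φ ((M i).map Complex.re) = 0 := by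
    simpa [hi] using hφ (.inl i)
  have hφ_im (i : Fin k) : φ ((M i).map Complex.im) = 0 := by simpa using hφ (.inr i)
  obtain ⟨N, r, u, v, hφ_sum⟩ := exists_sum_smul_sandwich_orthogonalGroup_eq φ
  have hre := map_sum_smul_ofReal_mul_mul Complex.reLm .univ r
    (fun j => (u j : Matrix (Fin n) (Fin n) ℝ)) (fun j => (v j : Matrix (Fin m) (Fin m) ℝ))
  have him := map_sum_smul_ofReal_mul_mul Complex.imLm .univ r
    (fun j => (u j : Matrix (Fin n) (Fin n) ℝ)) (fun j => (v j : Matrix (Fin m) (Fin m) ℝ))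
  simp only [hφ_sum, Complex.reLm_coe, Complex.imLm_coe] at hre him
  refine ⟨Fin N, inferInstance, r, u, v, fun h => hM.ne_zero (.inl i₀) ?_, fun i hi => ?_⟩
  · simpa [h, hφ_fix] using (hre (M i₀)).symm
  · exact eq_zero_of_map_re_eq_zero_of_map_im_eq_zero
      (by rw [hre, hφ_re i hi]) (by rw [him, hφ_im])
end

section
/- If M_1, M_2 ∈ M_n(ℂ) are skewsymmetric matrices and M_2 is not ℂ-colinear to M_1, then there exists a symmetric fluctuation f^T, i.e., real numbers r_j and unitaries u_j ∈ U(n), such that Σ_j r_j u_j M_1 u_jᵀ = 0 while Σ_j r_j u_j M_2 u_jᵀ ≠ 0. -/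
/-!
Symmetric fluctuations are closed under sums, composition and complex multiples: writing
`c = ‖c‖ ζ²` with `|ζ| = 1`, the phase is absorbed into the unitaries `ζ u_j`. For the sign-flip
diagonal unitary `D_p`, the fluctuation `(M - D_p M D_p) / 2` keeps exactly the entries of `M` with
one index equal to `p`; composing it for `p ≠ q` sends a skewsymmetric `M` to
`M_pq (E_pq - E_qp)`, and conjugating by a permutation matrix first, to `M_ab (E_pq - E_qp)`.
If `M₂` is not a multiple of `M₁ ≠ 0`, some minor `M₁_ab M₂_pq - M₁_pq M₂_ab` is nonzero
(and `a ≠ b`, `p ≠ q` since skewsymmetric matrices vanish on the diagonal), so the fluctuation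
`M ↦ (M₁_ab M_pq - M₁_pq M_ab)(E_pq - E_qp)` kills `M₁` but not `M₂`.
-/

open Matrix Equiv

theorem Complex.exists_mem_unitary_eq_norm_mul_sq (c : ℂ) :
    ∃ ζ ∈ unitary ℂ, c = ‖c‖ * ζ ^ 2 := by
  refine ⟨exp (c.arg / 2 * I), ?_, ?_⟩
  · rw [Unitary.mem_iff_star_mul_self, star_def, mul_comm, mul_conj, normSq_eq_norm_sq,
      ← ofReal_ofNat, ← ofReal_div, norm_exp_ofReal_mul_I]
    simp
  · rw [← exp_nat_mul]
    push_cast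
    rw [show (2 : ℂ) * (c.arg / 2 * I) = c.arg * I by ring, norm_mul_exp_arg_mul_I]

theorem Equiv.Perm.exists_apply_eq_and_apply_eq {α : Type*} {a b p q : α} (hpq : p ≠ q)
    (hab : a ≠ b) : ∃ σ : Perm α, σ p = a ∧ σ q = b :=
  MulAction.is_two_pretransitive_iff.mp (Perm.isMultiplyPretransitive α 2) hpq hab

theorem Matrix.exists_mul_sub_mul_ne_zero {m n K : Type*} [Field K] {A B : Matrix m n K}
    (hA : A ≠ 0) (hAB : ¬∃ c : K, B = c • A) :
    ∃ a b p q, A a b * B p q - A p q * B a b ≠ 0 := by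
  obtain ⟨a, b, hab⟩ : ∃ a b, A a b ≠ 0 := by
    by_contra! h
    exact hA (ext h)
  by_contra! h
  refine hAB ⟨B a b / A a b, ext fun p q => ?_⟩
  rw [smul_apply, smul_eq_mul, div_mul_eq_mul_div, eq_div_iff hab]
  linear_combination h a b p q

variable {ι R : Type*}

theorem Matrix.diag_eq_zero_of_transpose_eq_neg [Ring R] [NoZeroDivisors R] [CharZero R]
    {M : Matrix ι ι R} (hM : Mᵀ = -M) (i : ι) : M i i = 0 :=
  self_eq_neg.mp (congr_fun₂ hM i i)

variable [DecidableEq ι]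

def Matrix.skewSingle [Ring R] (p q : ι) : Matrix ι ι R := single p q 1 - single q p 1

theorem Matrix.skewSingle_ne_zero [Ring R] [Nontrivial R] {p q : ι} (hpq : p ≠ q) :
    skewSingle p q ≠ (0 : Matrix ι ι R) := fun h => by
  simpa [skewSingle, single_apply, hpq] using congr_fun₂ h p q

theorem Matrix.submatrix_skewSingle [Ring R] (σ : Perm ι) (p q : ι) :
    (skewSingle p q : Matrix ι ι R).submatrix σ σ = skewSingle (σ.symm p) (σ.symm q) := by
  simp [skewSingle, submatrix_sub]

def Matrix.signFlip [Ring R] (p : ι) : Matrix ι ι R := diagonal fun i => if i = p then -1 else 1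

theorem Matrix.signFlip_transpose [Ring R] (p : ι) : (signFlip p : Matrix ι ι R)ᵀ = signFlip p :=
  diagonal_transpose _

section Fintype

variable [Fintype ι]

theorem Matrix.permMatrix_mul_mul_transpose [Semiring R] (σ : Perm ι) (M : Matrix ι ι R) :
    σ.permMatrix R * M * (σ.permMatrix R)ᵀ = M.submatrix σ σ := by
  rw [transpose_permMatrix, PEquiv.toMatrix_toPEquiv_mul, PEquiv.mul_toMatrix_toPEquiv]
  rfl

theorem Matrix.permMatrix_mem_unitaryGroup [CommRing R] [StarRing R] (σ : Perm ι) :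
    σ.permMatrix R ∈ unitaryGroup ι R := by
  rw [mem_unitaryGroup_iff, star_eq_conjTranspose, conjTranspose_permMatrix, ← permMatrix_mul,
    inv_mul_cancel, permMatrix_one]

theorem Matrix.signFlip_mem_unitaryGroup [CommRing R] [StarRing R] (p : ι) :
    signFlip p ∈ unitaryGroup ι R := by
  rw [mem_unitaryGroup_iff, star_eq_conjTranspose, signFlip, diagonal_conjTranspose,
    diagonal_mul_diagonal, ← diagonal_one]
  congr 1
  ext i
  by_cases h : i = p <;> simp [h]

theorem Matrix.sub_signFlip_mul_mul_transpose_apply [CommRing R] (p : ι) (M : Matrix ι ι R)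
    (i j : ι) :
    (M - signFlip p * M * (signFlip p)ᵀ : Matrix ι ι R) i j =
      if (i = p ↔ j = p) then 0 else 2 * M i j := by
  rw [signFlip_transpose, signFlip, Matrix.sub_apply, mul_diagonal, diagonal_mul]
  by_cases hi : i = p <;> by_cases hj : j = p <;> simp [hi, hj] <;> ring

def IsSymmetricFluctuation (Φ : Matrix ι ι ℂ → Matrix ι ι ℂ) : Prop :=
  ∃ (J : Type) (_ : Fintype J) (r : J → ℝ) (u : J → unitaryGroup ι ℂ),
    ∀ M, Φ M = ∑ j, r j • ((u j : Matrix ι ι ℂ) * M * (u j : Matrix ι ι ℂ)ᵀ)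

theorem isSymmetricFluctuation_mul_mul_transpose {U : Matrix ι ι ℂ}
    (hU : U ∈ unitaryGroup ι ℂ) : IsSymmetricFluctuation fun M => U * M * Uᵀ :=
  ⟨Unit, inferInstance, fun _ => 1, fun _ => ⟨U, hU⟩, fun M => by simp⟩

theorem isSymmetricFluctuation_id : IsSymmetricFluctuation (ι := ι) fun M => M := by
  simpa using isSymmetricFluctuation_mul_mul_transpose (one_mem (unitaryGroup ι ℂ))

namespace IsSymmetricFluctuation

variable {Φ Ψ : Matrix ι ι ℂ → Matrix ι ι ℂ}

theorem add (hΦ : IsSymmetricFluctuation Φ) (hΨ : IsSymmetricFluctuation Ψ) :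
    IsSymmetricFluctuation fun M => Φ M + Ψ M := by
  obtain ⟨J, _, r, u, hΦ⟩ := hΦ
  obtain ⟨K, _, s, v, hΨ⟩ := hΨ
  exact ⟨J ⊕ K, inferInstance, Sum.elim r s, Sum.elim u v, fun M => by
    simp [hΦ, hΨ, Fintype.sum_sum_type]⟩

theorem smul (c : ℂ) (hΦ : IsSymmetricFluctuation Φ) :
    IsSymmetricFluctuation fun M => c • Φ M := by
  obtain ⟨ζ, hζ, hc⟩ := Complex.exists_mem_unitary_eq_norm_mul_sq c
  obtain ⟨J, _, r, u, hΦ⟩ := hΦ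
  refine ⟨J, inferInstance, fun j => ‖c‖ * r j,
    fun j => ⟨ζ • (u j : Matrix ι ι ℂ), Unitary.smul_mem_of_mem hζ (u j).2⟩, fun M => ?_⟩
  simp only [hΦ, Finset.smul_sum, transpose_smul, smul_mul_assoc, mul_smul_comm, smul_smul]
  refine Finset.sum_congr rfl fun j _ => ?_
  nth_rewrite 1 [hc]
  module

theorem sub (hΦ : IsSymmetricFluctuation Φ) (hΨ : IsSymmetricFluctuation Ψ) :
    IsSymmetricFluctuation fun M => Φ M - Ψ M := by
  simpa [sub_eq_add_neg] using hΦ.add (hΨ.smul (-1))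

theorem comp (hΦ : IsSymmetricFluctuation Φ) (hΨ : IsSymmetricFluctuation Ψ) :
    IsSymmetricFluctuation (Φ ∘ Ψ) := by
  obtain ⟨J, _, r, u, hΦ⟩ := hΦ
  obtain ⟨K, _, s, v, hΨ⟩ := hΨ
  refine ⟨J × K, inferInstance, fun jk => r jk.1 * s jk.2, fun jk => u jk.1 * v jk.2,
    fun M => ?_⟩
  simp [hΦ, hΨ, Fintype.sum_prod_type, Finset.mul_sum, Finset.sum_mul, transpose_mul,
    Matrix.mul_assoc, mul_smul, Finset.smul_sum]

end IsSymmetricFluctuation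

theorem exists_isSymmetricFluctuation_apply_eq_ite (p : ι) :
    ∃ Φ, IsSymmetricFluctuation Φ ∧
      ∀ M i j, Φ M i j = if (i = p ↔ j = p) then 0 else M i j := by
  refine ⟨fun M => (2⁻¹ : ℂ) • (M - signFlip p * M * (signFlip p)ᵀ), ?_, fun M i j => ?_⟩
  · exact (isSymmetricFluctuation_id.sub
      (isSymmetricFluctuation_mul_mul_transpose (signFlip_mem_unitaryGroup (R := ℂ) p))).smul _
  · dsimp only
    rw [Matrix.smul_apply, sub_signFlip_mul_mul_transpose_apply]
    split_ifs <;> simp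

theorem exists_isSymmetricFluctuation_eq_smul_skewSingle {p q : ι} (hpq : p ≠ q) :
    ∃ Φ, IsSymmetricFluctuation Φ ∧ ∀ M, Mᵀ = -M → Φ M = M p q • skewSingle p q := by
  obtain ⟨Φp, hΦp, hΦpM⟩ := exists_isSymmetricFluctuation_apply_eq_ite p
  obtain ⟨Φq, hΦq, hΦqM⟩ := exists_isSymmetricFluctuation_apply_eq_ite q
  refine ⟨Φq ∘ Φp, hΦq.comp hΦp, fun M hM => ext fun i j => ?_⟩
  have hqp : M q p = -M p q := by simpa using congr_fun₂ hM p q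
  simp only [Function.comp_apply, hΦqM, hΦpM, skewSingle, Matrix.smul_apply, Matrix.sub_apply,
    Matrix.single_apply, smul_eq_mul]
  grind

theorem exists_isSymmetricFluctuation_eq_apply_smul_skewSingle {a b p q : ι} (hab : a ≠ b)
    (hpq : p ≠ q) :
    ∃ Φ, IsSymmetricFluctuation Φ ∧ ∀ M, Mᵀ = -M → Φ M = M a b • skewSingle p q := by
  obtain ⟨σ, rfl, rfl⟩ := Perm.exists_apply_eq_and_apply_eq hpq hab
  obtain ⟨Φ, hΦ, hΦM⟩ := exists_isSymmetricFluctuation_eq_smul_skewSingle hab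
  refine ⟨fun M => σ.permMatrix ℂ * Φ M * (σ.permMatrix ℂ)ᵀ,
    (isSymmetricFluctuation_mul_mul_transpose (permMatrix_mem_unitaryGroup σ)).comp hΦ,
    fun M hM => ?_⟩
  simp only [permMatrix_mul_mul_transpose, hΦM M hM, submatrix_smul, Pi.smul_apply,
    submatrix_skewSingle, symm_apply_apply]

theorem exists_isSymmetricFluctuation_eq_mul_sub_mul_smul_skewSingle (N : Matrix ι ι ℂ)
    {a b p q : ι} (hab : a ≠ b) (hpq : p ≠ q) :
    ∃ Φ, IsSymmetricFluctuation Φ ∧ ∀ M, Mᵀ = -M →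
      Φ M = (N a b * M p q - N p q * M a b) • skewSingle p q := by
  obtain ⟨Φ, hΦ, hΦM⟩ := exists_isSymmetricFluctuation_eq_smul_skewSingle hpq
  obtain ⟨Ψ, hΨ, hΨM⟩ := exists_isSymmetricFluctuation_eq_apply_smul_skewSingle hab hpq
  refine ⟨fun M => N a b • Φ M - N p q • Ψ M, (hΦ.smul _).sub (hΨ.smul _), fun M hM => ?_⟩
  simp only [hΦM M hM, hΨM M hM, smul_smul, sub_smul]

end Fintype

/-- If the skewsymmetric matrix `M₂` is not ℂ-colinear to the skewsymmetric matrix `M₁`,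
there is a symmetric fluctuation annihilating `M₁` but not `M₂`. -/
theorem exists_symmetric_fluctuation_separating (n : ℕ)
    (M₁ M₂ : Matrix (Fin n) (Fin n) ℂ)
    (h₁ : M₁.transpose = -M₁) (h₂ : M₂.transpose = -M₂)
    (h : ¬ ∃ c : ℂ, M₂ = c • M₁) :
    ∃ (J : Type) (_ : Fintype J) (r : J → ℝ)
      (u : J → Matrix.unitaryGroup (Fin n) ℂ),
      (∑ j, r j • ((u j : Matrix (Fin n) (Fin n) ℂ) * M₁ *
          ((u j : Matrix (Fin n) (Fin n) ℂ)).transpose)) = 0 ∧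
      (∑ j, r j • ((u j : Matrix (Fin n) (Fin n) ℂ) * M₂ *
          ((u j : Matrix (Fin n) (Fin n) ℂ)).transpose)) ≠ 0 := by
  by_cases hM₁ : M₁ = 0
  · refine ⟨Unit, inferInstance, fun _ => 1, fun _ => 1, by simp [hM₁], ?_⟩
    simpa using fun hM₂ => h ⟨0, by simp [hM₂]⟩
  obtain ⟨a, b, p, q, hminor⟩ := exists_mul_sub_mul_ne_zero hM₁ h
  have hab : a ≠ b := by
    rintro rfl
    simp [diag_eq_zero_of_transpose_eq_neg h₁, diag_eq_zero_of_transpose_eq_neg h₂] at hminor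
  have hpq : p ≠ q := by
    rintro rfl
    simp [diag_eq_zero_of_transpose_eq_neg h₁, diag_eq_zero_of_transpose_eq_neg h₂] at hminor
  obtain ⟨Φ, ⟨J, _, r, u, hΦ⟩, hΦM⟩ :=
    exists_isSymmetricFluctuation_eq_mul_sub_mul_smul_skewSingle M₁ hab hpq
  refine ⟨J, inferInstance, r, u, ?_, ?_⟩
  · rw [← hΦ, hΦM M₁ h₁, mul_comm, sub_self, zero_smul]
  · rw [← hΦ, hΦM M₂ h₂]
    exact smul_ne_zero hminor (skewSingle_ne_zero hpq)
end
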